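/- Let n ≥ 1 and z ∈ ℝⁿ, and fix an index i ∈ {1,…,n}. Consider the n-dimensional Lebesgue measure on the open unit cube (0,1)ⁿ. Then the measure of the set {u ∈ (0,1)ⁿ : for all j ≠ i, zⁱ - log(-log uⁱ) > zʲ - log(-log uʲ)} equals exp(zⁱ) / Σ_{k=1}^{n} exp(zᵏ). Equivalently, if G¹,…,Gⁿ are i.i.d. standard Gumbel random variables, then P(argmax_j (zʲ + Gʲ) = i) equals the softmax probability exp(zⁱ)/Σ_k exp(zᵏ). -/
import Mathlib


open MeasureTheory

lemma gumbel_aux {t : ℝ} (ht0 : 0 < t) (ht1 : t < 1) (zj zi x : ℝ) :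
    (x ∈ Set.Ioo (0:ℝ) 1 ∧
        zj - Real.log (-Real.log x) < zi - Real.log (-Real.log t)) ↔
      x ∈ Set.Ioo (0:ℝ) (t ^ Real.exp (zj - zi)) := by
  have hlt : 0 < -Real.log t := neg_pos.mpr (Real.log_neg ht0 ht1)
  have hrpow : t ^ Real.exp (zj - zi) = Real.exp (Real.exp (zj - zi) * Real.log t) := by
    rw [Real.rpow_def_of_pos ht0, mul_comm]
  constructor
  · rintro ⟨⟨hx0, hx1⟩, h⟩
    have hlx : 0 < -Real.log x := neg_pos.mpr (Real.log_neg hx0 hx1)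
    have h1 : (zj - zi) + Real.log (-Real.log t) < Real.log (-Real.log x) := by linarith
    have h2 : Real.exp ((zj - zi) + Real.log (-Real.log t)) < -Real.log x :=
      (Real.lt_log_iff_exp_lt hlx).mp h1
    rw [Real.exp_add, Real.exp_log hlt] at h2
    have h3 : Real.log x < Real.exp (zj - zi) * Real.log t := by nlinarith
    have h4 : x < Real.exp (Real.exp (zj - zi) * Real.log t) := by
      calc x = Real.exp (Real.log x) := (Real.exp_log hx0).symm
        _ < _ := Real.exp_lt_exp.mpr h3
    exact ⟨hx0, by rw [hrpow]; exact h4⟩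
  · rintro ⟨hx0, hxlt⟩
    have hx1 : x < 1 :=
      lt_of_lt_of_le hxlt (Real.rpow_le_one ht0.le ht1.le (Real.exp_pos _).le)
    have hlx : 0 < -Real.log x := neg_pos.mpr (Real.log_neg hx0 hx1)
    have h3 : Real.log x < Real.exp (zj - zi) * Real.log t := by
      have := Real.log_lt_log hx0 hxlt
      rwa [Real.log_rpow ht0] at this
    have h2 : Real.exp (zj - zi) * (-Real.log t) < -Real.log x := by nlinarith
    have hpos : 0 < Real.exp (zj - zi) * (-Real.log t) := mul_pos (Real.exp_pos _) hlt
    have h1 : Real.log (Real.exp (zj - zi) * (-Real.log t)) < Real.log (-Real.log x) :=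
      Real.log_lt_log hpos h2
    rw [Real.log_mul (Real.exp_ne_zero _) (ne_of_gt hlt), Real.log_exp] at h1
    exact ⟨⟨hx0, hx1⟩, by linarith⟩

/-- The Gumbel-max trick: for `u` uniform on the open unit cube `(0,1)ⁿ`, the probability
that coordinate `i` maximizes `zʲ - log(-log uʲ)` equals the softmax probability
`exp(zⁱ) / ∑ₖ exp(zᵏ)`. -/
theorem gumbel_max_trick {n : ℕ} (hn : 1 ≤ n) (z : Fin n → ℝ) (i : Fin n) :
    volume {u : Fin n → ℝ |
        (∀ j, u j ∈ Set.Ioo (0 : ℝ) 1) ∧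
        ∀ j, j ≠ i →
          z j - Real.log (-Real.log (u j)) < z i - Real.log (-Real.log (u i))} =
      ENNReal.ofReal (Real.exp (z i) / ∑ k : Fin n, Real.exp (z k)) := by
  obtain ⟨m, rfl⟩ : ∃ m, n = m + 1 := ⟨n - 1, (Nat.succ_pred_eq_of_pos hn).symm⟩
  set a : Fin m → ℝ := fun k => Real.exp (z (i.succAbove k) - z i) with ha
  set A : ℝ := ∑ k, a k with hAdef
  have hA : 0 ≤ A := Finset.sum_nonneg fun k _ => (Real.exp_pos _).le
  set T : Set (ℝ × (Fin m → ℝ)) :=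
    {p | p.1 ∈ Set.Ioo (0:ℝ) 1 ∧ ∀ k, p.2 k ∈ Set.Ioo (0:ℝ) (p.1 ^ a k)} with hTdef
  have hT : MeasurableSet T := by
    have : T = {p : ℝ × (Fin m → ℝ) | p.1 ∈ Set.Ioo (0:ℝ) 1} ∩
        ⋂ k, {p : ℝ × (Fin m → ℝ) | p.2 k ∈ Set.Ioo (0:ℝ) (p.1 ^ a k)} := by
      ext p
      simp [hTdef, Set.mem_iInter]
    rw [this]
    refine (measurable_fst measurableSet_Ioo).inter (MeasurableSet.iInter fun k => ?_)
    have hm2 : Measurable fun p : ℝ × (Fin m → ℝ) => p.2 k := measurable_snd.eval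
    have hm1 : Measurable fun p : ℝ × (Fin m → ℝ) => p.1 ^ a k :=
      ((Real.continuous_rpow_const (Real.exp_pos _).le).comp continuous_fst).measurable
    have h1 : MeasurableSet {p : ℝ × (Fin m → ℝ) | 0 < p.2 k} :=
      measurableSet_lt measurable_const hm2
    have h2 : MeasurableSet {p : ℝ × (Fin m → ℝ) | p.2 k < p.1 ^ a k} :=
      measurableSet_lt hm2 hm1
    have : {p : ℝ × (Fin m → ℝ) | p.2 k ∈ Set.Ioo (0:ℝ) (p.1 ^ a k)} =
        {p : ℝ × (Fin m → ℝ) | 0 < p.2 k} ∩ {p | p.2 k < p.1 ^ a k} := by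
      ext p; simp [Set.mem_Ioo, Set.mem_inter_iff]
    rw [this]; exact h1.inter h2
  set e := MeasurableEquiv.piFinSuccAbove (fun _ : Fin (m+1) => ℝ) i with he
  have hS : {u : Fin (m+1) → ℝ |
      (∀ j, u j ∈ Set.Ioo (0 : ℝ) 1) ∧
      ∀ j, j ≠ i →
        z j - Real.log (-Real.log (u j)) < z i - Real.log (-Real.log (u i))} =
      e ⁻¹' T := by
    ext u
    have heu : e u = (u i, fun k => u (i.succAbove k)) := rfl
    simp only [Set.mem_preimage, heu, hTdef, Set.mem_setOf_eq]
    constructor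
    · rintro ⟨hmem, hineq⟩
      have hti := hmem i
      refine ⟨hti, fun k => ?_⟩
      exact (gumbel_aux hti.1 hti.2 _ _ _).mp ⟨hmem _, hineq _ (Fin.succAbove_ne i k)⟩
    · rintro ⟨hti, hk⟩
      constructor
      · intro j
        rcases eq_or_ne j i with rfl | hj
        · exact hti
        · obtain ⟨k, rfl⟩ := Fin.exists_succAbove_eq hj
          exact ((gumbel_aux hti.1 hti.2 _ _ _).mpr (hk k)).1
      · intro j hj
        obtain ⟨k, rfl⟩ := Fin.exists_succAbove_eq hj
        exact ((gumbel_aux hti.1 hti.2 _ _ _).mpr (hk k)).2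
  rw [hS,
    (volume_preserving_piFinSuccAbove (fun _ : Fin (m+1) => ℝ) i).measure_preimage
      hT.nullMeasurableSet]
  rw [Measure.volume_eq_prod, Measure.prod_apply hT]
  have hsec : ∀ t : ℝ, volume (Prod.mk t ⁻¹' T) =
      Set.indicator (Set.Ioo (0:ℝ) 1) (fun t => ENNReal.ofReal (t ^ A)) t := by
    intro t
    by_cases ht : t ∈ Set.Ioo (0:ℝ) 1
    · rw [Set.indicator_of_mem ht]
      have hpre : Prod.mk t ⁻¹' T = Set.pi Set.univ (fun k => Set.Ioo (0:ℝ) (t ^ a k)) := by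
        ext v
        simp only [Set.mem_preimage, hTdef, Set.mem_setOf_eq, Set.mem_univ_pi]
        exact ⟨fun h => h.2, fun h => ⟨ht, h⟩⟩
      rw [hpre, volume_pi_pi]
      simp only [Real.volume_Ioo, sub_zero]
      rw [← ENNReal.ofReal_prod_of_nonneg (fun k _ => Real.rpow_nonneg ht.1.le _)]
      congr 1
      calc ∏ k, t ^ a k = ∏ k, Real.exp (Real.log t * a k) := by
            refine Finset.prod_congr rfl fun k _ => ?_
            rw [Real.rpow_def_of_pos ht.1]
        _ = Real.exp (∑ k, Real.log t * a k) := (Real.exp_sum _ _).symm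
        _ = Real.exp (Real.log t * A) := by rw [← Finset.mul_sum]
        _ = t ^ A := (Real.rpow_def_of_pos ht.1 A).symm
    · rw [Set.indicator_of_notMem ht]
      have hpre : Prod.mk t ⁻¹' T = ∅ := by
        ext v
        simp only [Set.mem_preimage, hTdef, Set.mem_setOf_eq, Set.mem_empty_iff_false,
          iff_false]
        rintro ⟨h1, -⟩
        exact ht h1
      rw [hpre, measure_empty]
  rw [lintegral_congr hsec, lintegral_indicator measurableSet_Ioo]
  have hint : IntegrableOn (fun t : ℝ => t ^ A) (Set.Ioo 0 1) := by
    have h := intervalIntegral.intervalIntegrable_rpow (μ := volume) (r := A) (a := (0:ℝ)) (b := 1) (Or.inl hA)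
    exact ((intervalIntegrable_iff_integrableOn_Ioc_of_le (by norm_num)).mp h).mono_set
      Set.Ioo_subset_Ioc_self
  have hnn : 0 ≤ᵐ[volume.restrict (Set.Ioo (0:ℝ) 1)] fun t : ℝ => t ^ A :=
    (ae_restrict_iff' measurableSet_Ioo).mpr
      (Filter.Eventually.of_forall fun t ht => Real.rpow_nonneg ht.1.le A)
  rw [← ofReal_integral_eq_lintegral_ofReal hint hnn]
  congr 1
  have hval : ∫ t in Set.Ioo (0:ℝ) 1, t ^ A = 1 / (A + 1) := by
    rw [← integral_Ioc_eq_integral_Ioo,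
      ← intervalIntegral.integral_of_le (by norm_num : (0:ℝ) ≤ 1),
      integral_rpow (Or.inl (by linarith : (-1:ℝ) < A))]
    rw [Real.one_rpow, Real.zero_rpow (by linarith : A + 1 ≠ 0)]
    ring
  rw [hval]
  have key : (A + 1) * Real.exp (z i) = ∑ k : Fin (m+1), Real.exp (z k) := by
    rw [Fin.sum_univ_succAbove (fun k => Real.exp (z k)) i, hAdef, add_mul, one_mul,
      Finset.sum_mul, add_comm]
    congr 1
    refine Finset.sum_congr rfl fun k _ => ?_
    rw [ha, ← Real.exp_add]
    ring_nf
  rw [← key]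
  have hA1 : (0:ℝ) < A + 1 := by linarith
  field_simp
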